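/- The Euler–Lagrange equations of the multi-time least-squares Lagrangian L(t, x, (x_α)) = ½ Σ_{α,i} (x^i_α − X^i_α(t,x))² for maps x : ℝ^p → ℝ^n are Σ_α ∂²x^i/(∂t^α)² = Σ_{α,j} (∂X^j_α/∂x^i) X^j_α + Σ_{α,j} (∂X^i_α/∂x^j − ∂X^j_α/∂x^i) ∂x^j/∂t^α + Σ_α ∂X^i_α/∂t^α: a smooth map x satisfies Σ_α d/dt^α (∂L/∂x^i_α) = ∂L/∂x^i along its 1-jet if and only if it satisfies this second-order PDE system. -/

import Mathlib

open scoped BigOperators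

private lemma coord_fderiv' {p n : ℕ} (x : (Fin p → ℝ) → Fin n → ℝ) (hx : Differentiable ℝ x)
    (s : Fin p → ℝ) (i : Fin n) :
    fderiv ℝ (fun v => x v i) s = (ContinuousLinearMap.proj i).comp (fderiv ℝ x s) :=
  ((hasFDerivAt_apply (𝕜 := ℝ) i (x s)).comp s (hx s).hasFDerivAt).fderiv

private lemma lemA' {p n : ℕ} (c u₀ : Fin p → Fin n → ℝ) (α : Fin p) (i : Fin n) :
    fderiv ℝ (fun u : Fin p → Fin n → ℝ =>
      (1/2 : ℝ) * ∑ β : Fin p, ∑ j : Fin n, (u β j - c β j)^2) u₀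
      (Pi.single α (Pi.single i 1)) = u₀ α i - c α i := by
  have h : HasFDerivAt (fun u : Fin p → Fin n → ℝ =>
      (1/2 : ℝ) * ∑ β : Fin p, ∑ j : Fin n, (u β j - c β j)^2)
      ((1/2 : ℝ) • ∑ β : Fin p, ∑ j : Fin n,
        ((2 * (u₀ β j - c β j)) • ((ContinuousLinearMap.proj j).comp
          (ContinuousLinearMap.proj (R := ℝ) (φ := fun _ : Fin p => Fin n → ℝ) β)))) u₀ := by
    apply HasFDerivAt.const_mul
    apply HasFDerivAt.fun_sum
    intro β _
    apply HasFDerivAt.fun_sum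
    intro j _
    have h1 : HasFDerivAt (fun u : Fin p → Fin n → ℝ => u β j - c β j)
        ((ContinuousLinearMap.proj j).comp
          (ContinuousLinearMap.proj (R := ℝ) (φ := fun _ : Fin p => Fin n → ℝ) β)) u₀ :=
      ((hasFDerivAt_apply (𝕜 := ℝ) j (u₀ β)).comp u₀ (hasFDerivAt_apply (𝕜 := ℝ) β u₀)).sub_const _
    have h2 := h1.mul h1
    have e1 : (fun u : Fin p → Fin n → ℝ => (u β j - c β j)^2)
        = fun u => (u β j - c β j) * (u β j - c β j) := by ext u; ring
    rw [e1, two_mul, add_smul]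
    exact h2
  rw [h.fderiv]
  simp only [ContinuousLinearMap.smul_apply, ContinuousLinearMap.sum_apply,
    ContinuousLinearMap.coe_smul', Pi.smul_apply,
    ContinuousLinearMap.coe_comp', Function.comp_apply, ContinuousLinearMap.proj_apply,
    smul_eq_mul]
  rw [Finset.sum_eq_single α]
  · rw [Finset.sum_eq_single i]
    · simp only [Pi.single_eq_same]; ring
    · intro j _ hj; simp [Pi.single_apply, hj]
    · simp
  · intro β _ hβ; simp [Pi.single_apply, hβ]
  · simp

private lemma lemB' {p n : ℕ} (X : (Fin p → ℝ) × (Fin n → ℝ) → Fin p → Fin n → ℝ)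
    (hX : ContDiff ℝ (⊤ : ℕ∞) X) (t : Fin p → ℝ) (x₀ : Fin n → ℝ)
    (u₀ : Fin p → Fin n → ℝ) (i : Fin n) :
    fderiv ℝ (fun v => (1/2 : ℝ) * ∑ β : Fin p, ∑ j : Fin n,
        (u₀ β j - X (t, v) β j)^2) x₀ (Pi.single i 1)
      = ∑ β : Fin p, ∑ j : Fin n, (u₀ β j - X (t, x₀) β j) *
          (-(fderiv ℝ (fun v => X (t, v) β j) x₀ (Pi.single i 1))) := by
  have hg : ∀ (β : Fin p) (j : Fin n), Differentiable ℝ (fun v : Fin n → ℝ => X (t, v) β j) := by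
    intro β j v
    have hq : DifferentiableAt ℝ (fun v : Fin n → ℝ => X (t, v)) v :=
      (hX.differentiable (by simp) (t, v)).comp v
        (DifferentiableAt.prodMk (differentiableAt_const t) differentiableAt_id)
    exact ((hasFDerivAt_apply j (X (t, v) β)).comp v
      (((hasFDerivAt_apply β (X (t, v))).comp v hq.hasFDerivAt))).differentiableAt
  have h : HasFDerivAt (fun v => (1/2 : ℝ) * ∑ β : Fin p, ∑ j : Fin n,
      (u₀ β j - X (t, v) β j)^2)
      ((1/2 : ℝ) • ∑ β : Fin p, ∑ j : Fin n,
        ((u₀ β j - X (t, x₀) β j) • (-(fderiv ℝ (fun v => X (t, v) β j) x₀)) +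
         (u₀ β j - X (t, x₀) β j) • (-(fderiv ℝ (fun v => X (t, v) β j) x₀)))) x₀ := by
    apply HasFDerivAt.const_mul
    apply HasFDerivAt.fun_sum
    intro β _
    apply HasFDerivAt.fun_sum
    intro j _
    have h1 : HasFDerivAt (fun v => u₀ β j - X (t, v) β j)
        (-(fderiv ℝ (fun v => X (t, v) β j) x₀)) x₀ :=
      ((hg β j x₀).hasFDerivAt).const_sub _
    have h2 := h1.mul h1
    have e1 : (fun v : Fin n → ℝ => (u₀ β j - X (t, v) β j)^2)
        = fun v => (u₀ β j - X (t, v) β j) * (u₀ β j - X (t, v) β j) := by ext v; ring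
    rw [e1]
    exact h2
  rw [h.fderiv]
  simp only [ContinuousLinearMap.smul_apply, ContinuousLinearMap.sum_apply,
    ContinuousLinearMap.add_apply, ContinuousLinearMap.coe_smul', Pi.smul_apply,
    ContinuousLinearMap.neg_apply, smul_eq_mul]
  rw [Finset.mul_sum]
  refine Finset.sum_congr rfl fun β _ => ?_
  rw [Finset.mul_sum]
  refine Finset.sum_congr rfl fun j _ => ?_
  ring

private lemma lemC' {p n : ℕ} (X : (Fin p → ℝ) × (Fin n → ℝ) → Fin p → Fin n → ℝ)
    (hX : ContDiff ℝ (⊤ : ℕ∞) X)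
    (x : (Fin p → ℝ) → Fin n → ℝ) (hx : ContDiff ℝ (⊤ : ℕ∞) x)
    (t : Fin p → ℝ) (α : Fin p) (i : Fin n) (e : Fin p → ℝ) :
    fderiv ℝ (fun s => X (s, x s) α i) t e =
      fderiv ℝ (fun s => X (s, x t) α i) t e +
      ∑ j : Fin n, fderiv ℝ (fun v => X (t, v) α i) (x t) (Pi.single j 1) *
        fderiv ℝ (fun s => x s j) t e := by
  classical
  set F : (Fin p → ℝ) × (Fin n → ℝ) → ℝ := fun q => X q α i with hF
  have hXd : Differentiable ℝ X := hX.differentiable (by simp)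
  have hxd : Differentiable ℝ x := hx.differentiable (by simp)
  have hFd : Differentiable ℝ F := by
    intro q
    exact ((hasFDerivAt_apply i (X q α)).comp q
      (((hasFDerivAt_apply α (X q)).comp q (hXd q).hasFDerivAt))).differentiableAt
  set DF := fderiv ℝ F (t, x t) with hDF
  have hg : HasFDerivAt (fun s : Fin p → ℝ => (s, x s))
      ((ContinuousLinearMap.id ℝ (Fin p → ℝ)).prod (fderiv ℝ x t)) t :=
    HasFDerivAt.prodMk (hasFDerivAt_id t) (hxd t).hasFDerivAt
  have h1 : fderiv ℝ (fun s => F (s, x s)) t e = DF (e, fderiv ℝ x t e) := by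
    have hcomp := (((hFd (t, x t)).hasFDerivAt).comp t hg).fderiv
    simp only [Function.comp_def] at hcomp
    rw [hcomp]; rfl
  have hpt : fderiv ℝ (fun s => F (s, x t)) t e = DF (e, 0) := by
    have hg2 : HasFDerivAt (fun s : Fin p → ℝ => (s, x t))
        ((ContinuousLinearMap.id ℝ (Fin p → ℝ)).prod 0) t :=
      HasFDerivAt.prodMk (hasFDerivAt_id t) (hasFDerivAt_const (x t) t)
    have hcomp := (((hFd (t, x t)).hasFDerivAt).comp t hg2).fderiv
    simp only [Function.comp_def] at hcomp
    rw [hcomp]; rfl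
  have hpv : ∀ w, fderiv ℝ (fun v => F (t, v)) (x t) w = DF (0, w) := by
    intro w
    have hg3 : HasFDerivAt (fun v : Fin n → ℝ => ((t, v) : (Fin p → ℝ) × (Fin n → ℝ)))
        ((0 : (Fin n → ℝ) →L[ℝ] (Fin p → ℝ)).prod (ContinuousLinearMap.id ℝ (Fin n → ℝ))) (x t) :=
      HasFDerivAt.prodMk (hasFDerivAt_const t (x t)) (hasFDerivAt_id (x t))
    have hcomp := (((hFd (t, x t)).hasFDerivAt).comp (x t) hg3).fderiv
    simp only [Function.comp_def] at hcomp
    rw [hcomp]; rfl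
  have hsplit : DF (e, fderiv ℝ x t e) = DF (e, 0) + DF (0, fderiv ℝ x t e) := by
    rw [← map_add]; norm_num
  have hpair : ((0, fderiv ℝ x t e) : (Fin p → ℝ) × (Fin n → ℝ)) =
      ∑ j : Fin n, (fderiv ℝ x t e j) •
        ((0, Pi.single j 1) : (Fin p → ℝ) × (Fin n → ℝ)) := by
    rw [Prod.ext_iff]
    constructor
    · simp [Prod.fst_sum]
    · simp only [Prod.snd_sum, Prod.smul_snd]
      ext k
      simp [Finset.sum_apply, Pi.single_apply]
  have hlin : DF (0, fderiv ℝ x t e) =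
      ∑ j : Fin n, fderiv ℝ x t e j * DF (0, Pi.single j 1) := by
    rw [hpair, map_sum]
    apply Finset.sum_congr rfl
    intro j _
    rw [map_smul, smul_eq_mul]
  have hcoordj : ∀ j, fderiv ℝ (fun s => x s j) t e = fderiv ℝ x t e j := by
    intro j
    rw [coord_fderiv' x hxd]; rfl
  rw [h1, hsplit, ← hpt, hlin]
  congr 1
  apply Finset.sum_congr rfl
  intro j _
  rw [← hpv, hcoordj, mul_comm]

/-- The Euler–Lagrange equations of the multi-time least-squares Lagrangian
`L(t,x,u) = ½ Σ_{α,i} (uⁱ_α − Xⁱ_α(t,x))²`: a smooth map `x` satisfies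
`Σ_α D_α(∂L/∂uⁱ_α) = ∂L/∂xⁱ` along its 1-jet iff it satisfies
`Σ_α ∂²xⁱ/(∂tᵅ)² = Σ_{α,j} (∂Xʲ_α/∂xⁱ) Xʲ_α
+ Σ_{α,j} (∂Xⁱ_α/∂xʲ − ∂Xʲ_α/∂xⁱ) ∂xʲ/∂tᵅ + Σ_α ∂Xⁱ_α/∂tᵅ`. -/
theorem multitime_euler_lagrange_least_squares
    (p n : ℕ) (X : (Fin p → ℝ) × (Fin n → ℝ) → Fin p → Fin n → ℝ)
    (hX : ContDiff ℝ (⊤ : ℕ∞) X)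
    (L : (Fin p → ℝ) → (Fin n → ℝ) → (Fin p → Fin n → ℝ) → ℝ)
    (hL : ∀ t x u, L t x u =
      (1/2) * ∑ α : Fin p, ∑ i : Fin n, (u α i - X (t, x) α i)^2)
    (x : (Fin p → ℝ) → Fin n → ℝ) (hx : ContDiff ℝ (⊤ : ℕ∞) x) :
    (∀ t (i : Fin n),
        (∑ α : Fin p,
          fderiv ℝ (fun s =>
            fderiv ℝ (L s (x s))
              (fun β j => fderiv ℝ (fun v => x v j) s (Pi.single β 1))
              (Pi.single α (Pi.single i 1))) t (Pi.single α 1)) =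
        fderiv ℝ (fun v => L t v
            (fun β j => fderiv ℝ (fun u => x u j) t (Pi.single β 1))) (x t)
          (Pi.single i 1)) ↔
    (∀ t (i : Fin n),
        (∑ α : Fin p,
          fderiv ℝ (fun s => fderiv ℝ (fun u => x u i) s (Pi.single α 1)) t
            (Pi.single α 1)) =
        (∑ α : Fin p, ∑ j : Fin n,
            fderiv ℝ (fun v => X (t, v) α j) (x t) (Pi.single i 1) * X (t, x t) α j) +
        (∑ α : Fin p, ∑ j : Fin n,
            (fderiv ℝ (fun v => X (t, v) α i) (x t) (Pi.single j 1) -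
              fderiv ℝ (fun v => X (t, v) α j) (x t) (Pi.single i 1)) *
              fderiv ℝ (fun s => x s j) t (Pi.single α 1)) +
        (∑ α : Fin p,
            fderiv ℝ (fun s => X (s, x t) α i) t (Pi.single α 1))) := by
  classical
  have hXd : Differentiable ℝ X := hX.differentiable (by simp)
  have hxd : Differentiable ℝ x := hx.differentiable (by simp)
  -- differentiability of the X-composition
  have hXcomp : ∀ (α : Fin p) (i : Fin n), Differentiable ℝ (fun s => X (s, x s) α i) := by
    intro α i s
    have hq : DifferentiableAt ℝ (fun s : Fin p → ℝ => X (s, x s)) s :=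
      (hXd (s, x s)).comp s (differentiableAt_id.prodMk (hxd s))
    exact ((hasFDerivAt_apply i (X (s, x s) α)).comp s
      (((hasFDerivAt_apply α (X (s, x s))).comp s hq.hasFDerivAt))).differentiableAt
  -- differentiability of the first-derivative coordinates
  have hUdiff : ∀ (α : Fin p) (i : Fin n),
      Differentiable ℝ (fun s => fderiv ℝ (fun v => x v i) s (Pi.single α 1)) := by
    intro α i
    have h1 : ContDiff ℝ (⊤ : ℕ∞) (fderiv ℝ x) := hx.fderiv_right (by simp)
    have h2 : ContDiff ℝ (⊤ : ℕ∞) (fun s => fderiv ℝ x s (Pi.single α 1)) :=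
      h1.clm_apply contDiff_const
    have h3 : Differentiable ℝ (fun s => fderiv ℝ x s (Pi.single α 1) i) := by
      intro s
      exact ((hasFDerivAt_apply i (fderiv ℝ x s (Pi.single α 1))).comp s
        ((h2.differentiable (by simp)) s).hasFDerivAt).differentiableAt
    have heq : (fun s => fderiv ℝ (fun v => x v i) s (Pi.single α 1)) =
        (fun s => fderiv ℝ x s (Pi.single α 1) i) := by
      funext s
      rw [coord_fderiv' x hxd]; rfl
    rw [heq]
    exact h3
  refine forall_congr' fun t => forall_congr' fun i => ?_
  -- rewrite the EL left-hand side
  have hLHS : (∑ α : Fin p,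
      fderiv ℝ (fun s =>
        fderiv ℝ (L s (x s))
          (fun β j => fderiv ℝ (fun v => x v j) s (Pi.single β 1))
          (Pi.single α (Pi.single i 1))) t (Pi.single α 1)) =
      (∑ α : Fin p,
        fderiv ℝ (fun s => fderiv ℝ (fun u => x u i) s (Pi.single α 1)) t (Pi.single α 1)) -
      ((∑ α : Fin p, fderiv ℝ (fun s => X (s, x t) α i) t (Pi.single α 1)) +
       (∑ α : Fin p, ∑ j : Fin n,
          fderiv ℝ (fun v => X (t, v) α i) (x t) (Pi.single j 1) *
            fderiv ℝ (fun s => x s j) t (Pi.single α 1))) := by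
    rw [← Finset.sum_add_distrib, ← Finset.sum_sub_distrib]
    refine Finset.sum_congr rfl fun α _ => ?_
    have hfun : (fun s =>
        fderiv ℝ (L s (x s))
          (fun β j => fderiv ℝ (fun v => x v j) s (Pi.single β 1))
          (Pi.single α (Pi.single i 1))) =
        (fun s => fderiv ℝ (fun v => x v i) s (Pi.single α 1) - X (s, x s) α i) := by
      funext s
      rw [show L s (x s) = (fun u => (1/2 : ℝ) * ∑ β : Fin p, ∑ j : Fin n,
        (u β j - X (s, x s) β j)^2) from funext (hL s (x s))]
      exact lemA' (X (s, x s)) _ α i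
    rw [hfun, fderiv_fun_sub ((hUdiff α i) t) ((hXcomp α i) t), ContinuousLinearMap.sub_apply,
      lemC' X hX x hx t α i (Pi.single α 1)]
  -- rewrite the EL right-hand side
  have hRHS : fderiv ℝ (fun v => L t v
      (fun β j => fderiv ℝ (fun u => x u j) t (Pi.single β 1))) (x t) (Pi.single i 1) =
      ∑ β : Fin p, ∑ j : Fin n,
        (fderiv ℝ (fun u => x u j) t (Pi.single β 1) - X (t, x t) β j) *
          (-(fderiv ℝ (fun v => X (t, v) β j) (x t) (Pi.single i 1))) := by
    rw [show (fun v => L t v (fun β j => fderiv ℝ (fun u => x u j) t (Pi.single β 1))) =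
      (fun v => (1/2 : ℝ) * ∑ β : Fin p, ∑ j : Fin n,
        ((fun β j => fderiv ℝ (fun u => x u j) t (Pi.single β 1)) β j - X (t, v) β j)^2)
      from funext (fun v => hL t v _)]
    exact lemB' X hX t (x t) _ i
  rw [hLHS, hRHS]
  -- now pure algebra
  have key : (∑ α : Fin p, ∑ j : Fin n,
        fderiv ℝ (fun v => X (t, v) α j) (x t) (Pi.single i 1) * X (t, x t) α j) +
      (∑ α : Fin p, ∑ j : Fin n,
        (fderiv ℝ (fun v => X (t, v) α i) (x t) (Pi.single j 1) -
          fderiv ℝ (fun v => X (t, v) α j) (x t) (Pi.single i 1)) *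
          fderiv ℝ (fun s => x s j) t (Pi.single α 1)) =
      (∑ β : Fin p, ∑ j : Fin n,
        (fderiv ℝ (fun u => x u j) t (Pi.single β 1) - X (t, x t) β j) *
          (-(fderiv ℝ (fun v => X (t, v) β j) (x t) (Pi.single i 1)))) +
      (∑ α : Fin p, ∑ j : Fin n,
        fderiv ℝ (fun v => X (t, v) α i) (x t) (Pi.single j 1) *
          fderiv ℝ (fun s => x s j) t (Pi.single α 1)) := by
    rw [← Finset.sum_add_distrib, ← Finset.sum_add_distrib]
    refine Finset.sum_congr rfl fun α _ => ?_
    rw [← Finset.sum_add_distrib, ← Finset.sum_add_distrib]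
    refine Finset.sum_congr rfl fun j _ => ?_
    ring
  constructor <;> intro h <;> linarith
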